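/- arXiv:1102.1628 — 3 statements merged into one kernel-verified Lean document; each statement's English description precedes it below -/
import Mathlib

section
/- Let D be a positive integer that is not a perfect square. The set G = { (x + y√D)/2 : x, y ∈ ℤ, x² − Dy² = ±4 } is a subgroup of the multiplicative group of nonzero real numbers. -/
/-!
Write `N(x, y) = x² − D y²`. If `s² = D`, then `(x + y s)/2 · (x − y s)/2 = N(x, y)/4 = ±1`, so the
inverse of such a number is `±(x − y s)/2`, again of the same shape. For a product,
`(x₁ + y₁ s)(x₂ + y₂ s)/4 = (X + Y s)/2` with `X = (x₁x₂ + D y₁y₂)/2`, `Y = (x₁y₂ + x₂y₁)/2` and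
`4 N(X, Y) = N(x₁, y₁) N(x₂, y₂) = ±16`. The only point is that `X` and `Y` are integers:
`N(x, y)` even forces `x ≡ D y (mod 2)`, and then both numerators are even.
-/

def IsHalfPellUnit {K : Type*} [Field K] (D : ℤ) (s u : K) : Prop :=
  ∃ x y : ℤ, u = (x + y * s) / 2 ∧ (x ^ 2 - D * y ^ 2 = 4 ∨ x ^ 2 - D * y ^ 2 = -4)

lemma eq_four_or_eq_neg_four_iff_sq {a : ℤ} : a = 4 ∨ a = -4 ↔ a ^ 2 = 16 := by
  rw [show (16 : ℤ) = 4 ^ 2 by norm_num, sq_eq_sq_iff_eq_or_eq_neg]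

lemma ZMod.two_brahmagupta_eq_zero {a b c d e : ZMod 2} (h₁ : a ^ 2 - e * b ^ 2 = 0)
    (h₂ : c ^ 2 - e * d ^ 2 = 0) : a * c + e * (b * d) = 0 ∧ a * d + b * c = 0 := by
  revert a b c d e; decide

lemma two_dvd_brahmagupta {a b c d e : ℤ} (h₁ : 2 ∣ a ^ 2 - e * b ^ 2)
    (h₂ : 2 ∣ c ^ 2 - e * d ^ 2) : 2 ∣ a * c + e * (b * d) ∧ 2 ∣ a * d + b * c := by
  have two_dvd_iff {n : ℤ} : 2 ∣ n ↔ (n : ZMod 2) = 0 :=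
    (ZMod.intCast_zmod_eq_zero_iff_dvd n 2).symm
  simp only [two_dvd_iff] at h₁ h₂ ⊢
  push_cast at h₁ h₂ ⊢
  exact ZMod.two_brahmagupta_eq_zero h₁ h₂

namespace IsHalfPellUnit

variable {K : Type*} [Field K] [CharZero K] {D : ℤ} {s u v : K}

lemma one : IsHalfPellUnit D s 1 :=
  ⟨2, 0, by norm_num, by norm_num⟩

lemma mul (hs : s ^ 2 = D) (hu : IsHalfPellUnit D s u) (hv : IsHalfPellUnit D s v) :
    IsHalfPellUnit D s (u * v) := by
  obtain ⟨x₁, y₁, rfl, h₁⟩ := hu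
  obtain ⟨x₂, y₂, rfl, h₂⟩ := hv
  rw [eq_four_or_eq_neg_four_iff_sq] at h₁ h₂
  have two_dvd_norm {x y : ℤ} (h : (x ^ 2 - D * y ^ 2) ^ 2 = 16) : 2 ∣ x ^ 2 - D * y ^ 2 :=
    Int.prime_two.dvd_of_dvd_pow (n := 2) (by rw [h]; norm_num)
  obtain ⟨⟨X, hX⟩, ⟨Y, hY⟩⟩ := two_dvd_brahmagupta (two_dvd_norm h₁) (two_dvd_norm h₂)
  have hXY : 4 * (X ^ 2 - D * Y ^ 2) = (x₁ ^ 2 - D * y₁ ^ 2) * (x₂ ^ 2 - D * y₂ ^ 2) := by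
    linear_combination
      (D * (x₁ * y₂ + y₁ * x₂ + 2 * Y)) * hY - (x₁ * x₂ + D * (y₁ * y₂) + 2 * X) * hX
  refine ⟨X, Y, ?_, ?_⟩
  · have hX' : (x₁ * x₂ + D * (y₁ * y₂) : K) = 2 * X := by exact_mod_cast hX
    have hY' : (x₁ * y₂ + y₁ * x₂ : K) = 2 * Y := by exact_mod_cast hY
    linear_combination (y₁ * y₂ / 4 : K) * hs + (1 / 4 : K) * hX' + (s / 4) * hY'
  · refine eq_four_or_eq_neg_four_iff_sq.mpr
      (mul_left_cancel₀ (a := (4 : ℤ) ^ 2) (by norm_num) ?_)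
    rw [← mul_pow, hXY, mul_pow, h₁, h₂]; norm_num

lemma inv (hs : s ^ 2 = D) (hu : IsHalfPellUnit D s u) : IsHalfPellUnit D s u⁻¹ := by
  obtain ⟨x, y, rfl, h⟩ := hu
  have hN : ((x ^ 2 - D * y ^ 2 : ℤ) : K) = x ^ 2 - s ^ 2 * y ^ 2 := by push_cast; rw [hs]
  rcases h with h | h
  · refine ⟨x, -y, ?_, Or.inl (by linear_combination h)⟩
    rw [h] at hN
    push_cast
    refine inv_eq_of_mul_eq_one_right ?_
    linear_combination (-1 / 4 : K) * hN
  · refine ⟨-x, y, ?_, Or.inr (by linear_combination h)⟩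
    rw [h] at hN
    push_cast
    refine inv_eq_of_mul_eq_one_right ?_
    linear_combination (1 / 4 : K) * hN

end IsHalfPellUnit

theorem pell_group_is_subgroup_general (D : ℤ) (hD : 0 < D) :
    ∃ H : Subgroup ℝˣ, (H : Set ℝˣ) =
      {u : ℝˣ | ∃ x y : ℤ, (u : ℝ) = ((x : ℝ) + (y : ℝ) * Real.sqrt (D : ℝ)) / 2 ∧
        (x ^ 2 - D * y ^ 2 = 4 ∨ x ^ 2 - D * y ^ 2 = -4)} := by
  have hs : Real.sqrt D ^ 2 = D := Real.sq_sqrt (by exact_mod_cast hD.le)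
  refine ⟨
    { carrier := {u : ℝˣ | IsHalfPellUnit D (Real.sqrt D) (u : ℝ)}
      one_mem' := IsHalfPellUnit.one
      mul_mem' := fun hu hv => hu.mul hs hv
      inv_mem' := fun {u} hu => by
        simpa only [Set.mem_ofPred_eq, Units.val_inv_eq_inv_val] using hu.inv hs }, rfl⟩

theorem pell_group_is_subgroup (D : ℤ) (hD : 0 < D) (hns : ¬ IsSquare D) :
    ∃ H : Subgroup ℝˣ, (H : Set ℝˣ) =
      {u : ℝˣ | ∃ x y : ℤ, (u : ℝ) = ((x : ℝ) + (y : ℝ) * Real.sqrt (D : ℝ)) / 2 ∧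
        (x ^ 2 - D * y ^ 2 = 4 ∨ x ^ 2 - D * y ^ 2 = -4)} :=
  pell_group_is_subgroup_general D hD
end

section
/- Let p, q, r be integers with p > 0, let α be a real root of px² + qx + r, and let D = q² − 4pr. Suppose x, y are integers with x² − Dy² = ±4 and yp·α + (x + yq)/2 ≠ 0. Then ((x − yq)/2 · α − yr)/(yp·α + (x + yq)/2) = α. -/
theorem pell_matrix_fixes_root_general (p q r : ℤ) (α : ℝ)
    (hroot : (p : ℝ) * α ^ 2 + q * α + r = 0)
    (x y : ℤ)
    (hden : (y : ℝ) * p * α + ((x : ℝ) + y * q) / 2 ≠ 0) :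
    (((x : ℝ) - y * q) / 2 * α - y * r) / ((y : ℝ) * p * α + ((x : ℝ) + y * q) / 2) = α := by
  rw [div_eq_iff hden]
  linear_combination (-(y : ℝ)) * hroot

theorem pell_matrix_fixes_root (p q r : ℤ) (hp : 0 < p) (α : ℝ)
    (hroot : (p : ℝ) * α ^ 2 + q * α + r = 0) (D : ℤ) (hD : D = q ^ 2 - 4 * p * r)
    (x y : ℤ) (hpell : x ^ 2 - D * y ^ 2 = 4 ∨ x ^ 2 - D * y ^ 2 = -4)
    (hden : (y : ℝ) * p * α + ((x : ℝ) + y * q) / 2 ≠ 0) :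
    (((x : ℝ) - y * q) / 2 * α - y * r) / ((y : ℝ) * p * α + ((x : ℝ) + y * q) / 2) = α :=
  pell_matrix_fixes_root_general p q r α hroot x y hden
end

section
/- Let p, q, r ∈ ℤ with p > 0 and D = q² − 4pr. The map Γ sending (x + y√D)/2 (with x² − Dy² = ±4) to the matrix [[(x−yq)/2, −yr],[yp, (x+yq)/2]] is multiplicative: Γ(z·z') = Γ(z)·Γ(z') for z, z' in the Pell group G = {(x+y√D)/2 : x² − Dy² = ±4}. -/
/-!
Write `x = 2a + yq`, so that `(x + y√D)/2 = a + yω` with `ω = (q + √D)/2`. The matrix attached to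
it is `a + yM` with `M = [[0, -r], [p, q]]`; as `ω` and `M` both satisfy `t² = qt - pr`, this is
the ring map `ℤ[ω] → M₂(ℤ)`, `ω ↦ M`, hence multiplicative. The halvings are exact because
`D ≡ q² (mod 4)` and `x² - Dy² = ±4` force `x ≡ yq (mod 2)`, and the product determines `X` and `Y`
because `√D` is irrational.
-/

theorem Int.eq_and_eq_of_add_mul_sqrt_eq {D a b c d : ℤ} (hD : 0 ≤ D) (hns : ¬IsSquare D)
    (h : (a : ℝ) + b * √(D : ℝ) = c + d * √(D : ℝ)) : a = c ∧ b = d := by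
  have hirr : Irrational √(D : ℝ) := (irrational_sqrt_intCast_iff_of_nonneg hD).mpr hns
  have hbd : b = d := by
    by_contra hne
    have hsub : ((b - d : ℤ) : ℝ) * √(D : ℝ) = ((c - a : ℤ) : ℝ) := by push_cast; linarith
    exact (hirr.intCast_mul (sub_ne_zero.mpr hne)).ne_int _ hsub
  subst hbd
  exact ⟨by exact_mod_cast add_right_cancel h, rfl⟩

theorem Int.two_dvd_sub_mul_of_even_sq_sub {D p q r u v : ℤ} (hD : D = q ^ 2 - 4 * p * r)
    (h : Even (u ^ 2 - D * v ^ 2)) : 2 ∣ u - v * q := by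
  have hprod : Even ((u - v * q) * (u + v * q)) := by
    have : (u - v * q) * (u + v * q) = u ^ 2 - D * v ^ 2 - 2 * (2 * p * r * v ^ 2) := by
      rw [hD]; ring
    exact this ▸ h.sub (even_two_mul _)
  rw [← even_iff_two_dvd]
  rcases Int.even_mul.mp hprod with h | h
  · exact h
  · have : u - v * q = u + v * q - 2 * (v * q) := by ring
    exact this ▸ h.sub (even_two_mul _)

def pellMatrix (p q r a y : ℤ) : Matrix (Fin 2) (Fin 2) ℤ :=
  !![a, -y * r; y * p, a + y * q]

theorem pellMatrix_mul (p q r a y a' y' : ℤ) :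
    pellMatrix p q r a y * pellMatrix p q r a' y' =
      pellMatrix p q r (a * a' - p * r * y * y') (a * y' + a' * y + q * y * y') := by
  ext i j
  fin_cases i <;> fin_cases j <;> simp [pellMatrix, Matrix.mul_apply, Fin.sum_univ_two] <;> ring

theorem of_halves_eq_pellMatrix {p q r x y a : ℤ} (h : x - y * q = 2 * a) :
    Matrix.of ![![(x - y * q) / 2, -y * r], ![y * p, (x + y * q) / 2]] = pellMatrix p q r a y := by
  have hx : x + y * q = 2 * (a + y * q) := by linear_combination h
  rw [pellMatrix, h, hx, Int.mul_ediv_cancel_left _ two_ne_zero,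
    Int.mul_ediv_cancel_left _ two_ne_zero]

theorem pell_matrix_multiplicative_general (p q r : ℤ) (D : ℤ)
    (hD : D = q ^ 2 - 4 * p * r) (hDpos : 0 < D) (hns : ¬ IsSquare D)
    (x y x' y' X Y : ℤ)
    (hpell : x ^ 2 - D * y ^ 2 = 4 ∨ x ^ 2 - D * y ^ 2 = -4)
    (hpell' : x' ^ 2 - D * y' ^ 2 = 4 ∨ x' ^ 2 - D * y' ^ 2 = -4)
    (hmul : ((X : ℝ) + Y * Real.sqrt (D : ℝ)) / 2 =
      (((x : ℝ) + y * Real.sqrt (D : ℝ)) / 2) * (((x' : ℝ) + y' * Real.sqrt (D : ℝ)) / 2)) :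
    Matrix.of ![![(X - Y * q) / 2, -Y * r], ![Y * p, (X + Y * q) / 2]] =
      Matrix.of ![![(x - y * q) / 2, -y * r], ![y * p, (x + y * q) / 2]] *
        Matrix.of ![![(x' - y' * q) / 2, -y' * r], ![y' * p, (x' + y' * q) / 2]] := by
  have hsq : √(D : ℝ) ^ 2 = D := Real.sq_sqrt (by exact_mod_cast hDpos.le)
  obtain ⟨hX, hY⟩ : 2 * X = x * x' + D * y * y' ∧ 2 * Y = x * y' + x' * y :=
    Int.eq_and_eq_of_add_mul_sqrt_eq hDpos.le hns
      (by push_cast; linear_combination 4 * hmul + (y * y' : ℝ) * hsq)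
  have hparity : ∀ {u v : ℤ}, (u ^ 2 - D * v ^ 2 = 4 ∨ u ^ 2 - D * v ^ 2 = -4) → 2 ∣ u - v * q :=
    fun h ↦ Int.two_dvd_sub_mul_of_even_sq_sub hD (by rcases h with h | h <;> rw [h] <;> decide)
  obtain ⟨a, ha⟩ := hparity hpell
  obtain ⟨a', ha'⟩ := hparity hpell'
  have hY' : Y = a * y' + a' * y + q * y * y' :=
    mul_left_cancel₀ two_ne_zero (by linear_combination hY + y' * ha + y * ha')
  have hX' : X - Y * q = 2 * (a * a' - p * r * y * y') :=
    mul_left_cancel₀ two_ne_zero (by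
      linear_combination hX - q * hY + (x' - y' * q) * ha + 2 * a * ha' + y * y' * hD)
  rw [of_halves_eq_pellMatrix ha, of_halves_eq_pellMatrix ha', of_halves_eq_pellMatrix hX',
    pellMatrix_mul, hY']

theorem pell_matrix_multiplicative (p q r : ℤ) (hp : 0 < p) (D : ℤ)
    (hD : D = q ^ 2 - 4 * p * r) (hDpos : 0 < D) (hns : ¬ IsSquare D)
    (x y x' y' X Y : ℤ)
    (hpell : x ^ 2 - D * y ^ 2 = 4 ∨ x ^ 2 - D * y ^ 2 = -4)
    (hpell' : x' ^ 2 - D * y' ^ 2 = 4 ∨ x' ^ 2 - D * y' ^ 2 = -4)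
    (hmul : ((X : ℝ) + Y * Real.sqrt (D : ℝ)) / 2 =
      (((x : ℝ) + y * Real.sqrt (D : ℝ)) / 2) * (((x' : ℝ) + y' * Real.sqrt (D : ℝ)) / 2)) :
    Matrix.of ![![(X - Y * q) / 2, -Y * r], ![Y * p, (X + Y * q) / 2]] =
      Matrix.of ![![(x - y * q) / 2, -y * r], ![y * p, (x + y * q) / 2]] *
        Matrix.of ![![(x' - y' * q) / 2, -y' * r], ![y' * p, (x' + y' * q) / 2]] :=
  pell_matrix_multiplicative_general p q r D hD hDpos hns x y x' y' X Y hpell hpell' hmul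
end
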